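/- Let M satisfy the Reset Cliff assumption and let (P̂_h)_{h=1}^H be admissible estimates. If π^{AIL} is any global minimizer of the VAIL objective L(π) = Σ_{h=1}^H Σ_{(s,a)} |P^π_h(s,a) − P̂_h(s,a)|, then π^{AIL}_h(a¹|s) = 1 for every s ∈ S^G and every h ∈ {1,…,H−1}; i.e., any globally optimal solution exactly recovers the expert action on all good states in the first H−1 time steps. -/

import Mathlib

open Finset

/-- State distribution `d^π_h` of a policy `π` in an episodic tabular MDP
(time steps are 0-indexed: `stateDist ρ P π 0 = ρ`). -/
noncomputable def stateDist {S A : Type*} [Fintype S] [Fintype A] (ρ : S → ℝ)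
    (P : ℕ → S → A → S → ℝ) (π : ℕ → S → A → ℝ) : ℕ → S → ℝ
  | 0 => ρ
  | h + 1 => fun s' => ∑ s : S, ∑ a : A, stateDist ρ P π h s * π h s a * P h s a s'

/-- State-action distribution `P^π_h(s,a) = d^π_h(s) π_h(a|s)`. -/
noncomputable def saDist {S A : Type*} [Fintype S] [Fintype A] (ρ : S → ℝ)
    (P : ℕ → S → A → S → ℝ) (π : ℕ → S → A → ℝ) (h : ℕ) (s : S) (a : A) : ℝ :=
  stateDist ρ P π h s * π h s a

/-- Policy value `V^π = Σ_{h<H} Σ_{(s,a)} P^π_h(s,a) r_h(s,a)`. -/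
noncomputable def policyValue {S A : Type*} [Fintype S] [Fintype A] (ρ : S → ℝ)
    (P : ℕ → S → A → S → ℝ) (π : ℕ → S → A → ℝ) (r : ℕ → S → A → ℝ) (H : ℕ) : ℝ :=
  ∑ h ∈ Finset.range H, ∑ s : S, ∑ a : A, saDist ρ P π h s a * r h s a

/-- `π` is a (Markovian, non-stationary) policy. -/
def IsPolicy {S A : Type*} [Fintype A] (π : ℕ → S → A → ℝ) : Prop :=
  ∀ h s, (∀ a, 0 ≤ π h s a) ∧ (∑ a : A, π h s a) = 1

/-- `P` is a transition function. -/
def IsTransition {S A : Type*} [Fintype S] (P : ℕ → S → A → S → ℝ) : Prop :=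
  ∀ h s a, (∀ s', 0 ≤ P h s a s') ∧ (∑ s' : S, P h s a s') = 1

/-- `ρ` is an initial state distribution. -/
def IsInitDist {S : Type*} [Fintype S] (ρ : S → ℝ) : Prop :=
  (∀ s, 0 ≤ ρ s) ∧ (∑ s : S, ρ s) = 1

/-- Rewards take values in `[0,1]`. -/
def IsReward {S A : Type*} (r : ℕ → S → A → ℝ) : Prop :=
  ∀ h s a, 0 ≤ r h s a ∧ r h s a ≤ 1

/-- The VAIL state-action distribution matching objective
`L(π) = Σ_{h<H} Σ_{(s,a)} |P^π_h(s,a) − Q_h(s,a)|`. -/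
noncomputable def vailLoss {S A : Type*} [Fintype S] [Fintype A] (ρ : S → ℝ)
    (P : ℕ → S → A → S → ℝ) (π : ℕ → S → A → ℝ) (Q : ℕ → S → A → ℝ) (H : ℕ) : ℝ :=
  ∑ h ∈ Finset.range H, ∑ s : S, ∑ a : A, |saDist ρ P π h s a - Q h s a|

/-- The Reset Cliff assumption: good states `G` (with bad states `Gᶜ`), expert action `a1`. -/
def ResetCliff {S A : Type*} [Fintype S] [Fintype A] [DecidableEq S]
    (ρ : S → ℝ) (P : ℕ → S → A → S → ℝ) (r : ℕ → S → A → ℝ)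
    (G : Finset S) (a1 : A) : Prop :=
  G.Nonempty ∧
  (∀ (h : ℕ), ∀ s ∈ G, r h s a1 = 1) ∧
  (∀ (h : ℕ) (s : S) (a : A), (s ∉ G ∨ a ≠ a1) → r h s a = 0) ∧
  (∀ (h : ℕ), ∀ s ∈ G, (∑ s' ∈ G, P h s a1 s') = 1) ∧
  (∀ (h : ℕ), ∀ s ∈ G, ∀ s' ∈ G, 0 < P h s a1 s') ∧
  (∀ (h : ℕ), ∀ s ∈ G, ∀ a : A, a ≠ a1 → (∑ s' ∈ Gᶜ, P h s a s') = 1) ∧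
  (∀ (h : ℕ), ∀ s ∉ G, ∀ a : A, (∑ s' ∈ Gᶜ, P h s a s') = 1) ∧
  (∀ s ∈ G, 0 < ρ s) ∧
  (∀ s ∉ G, ρ s = 0)

/-- Admissible estimates for the expert state-action distributions on a Reset Cliff instance. -/
def AdmissibleEst {S A : Type*} [Fintype S] [DecidableEq S]
    (G : Finset S) (a1 : A) (Q : ℕ → S → A → ℝ) (H : ℕ) : Prop :=
  ∀ h < H, (∀ s a, 0 ≤ Q h s a) ∧
    (∀ (s : S) (a : A), (s ∉ G ∨ a ≠ a1) → Q h s a = 0) ∧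
    (∑ s ∈ G, Q h s a1) = 1

/-! Write `y k s = saDist ρ P π k s a1` for the mass a policy puts on the expert pair at a good
state `s`. Since the estimates vanish off the expert pairs, the step-`k` loss is
`1 + ∑ s ∈ G, (|y k s - Q k s a1| - y k s)`, which is antitone in `y k`. Mass enters `G` only
through expert pairs, so switching a policy to the expert action on `G` from step `h` on raises
every `y k`. If a minimizer deviates at step `h` in a good state (reached with positive
probability, by induction on `h`), it leaves mass below `1` on `G` at step `h + 1`; so some
expert pair is under-covered at step `h + 1` while the switch strictly raises its mass there, and
the loss drops strictly as long as `h + 1 < H`. -/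

open Finset

theorem IsPolicy.le_one {S A : Type*} [Fintype A] {π : ℕ → S → A → ℝ} (hπ : IsPolicy π)
    (k : ℕ) (s : S) (a : A) : π k s a ≤ 1 :=
  (hπ k s).2 ▸ single_le_sum (fun b _ => (hπ k s).1 b) (mem_univ a)

section MDP

variable {S A : Type*} [Fintype S] [Fintype A]
  {ρ : S → ℝ} {P : ℕ → S → A → S → ℝ} {π π' : ℕ → S → A → ℝ}

theorem stateDist_succ (k : ℕ) (s' : S) :
    stateDist ρ P π (k + 1) s' = ∑ s, ∑ a, stateDist ρ P π k s * π k s a * P k s a s' :=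
  rfl

theorem stateDist_nonneg (hρ : IsInitDist ρ) (hP : IsTransition P) (hπ : IsPolicy π)
    (k : ℕ) (s : S) : 0 ≤ stateDist ρ P π k s := by
  induction k generalizing s with
  | zero => exact hρ.1 s
  | succ k ih =>
    exact sum_nonneg fun s _ => sum_nonneg fun a _ =>
      mul_nonneg (mul_nonneg (ih s) ((hπ k s).1 a)) ((hP k s a).1 _)

theorem sum_stateDist (hρ : IsInitDist ρ) (hP : IsTransition P) (hπ : IsPolicy π) (k : ℕ) :
    ∑ s, stateDist ρ P π k s = 1 := by
  induction k with
  | zero => exact hρ.2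
  | succ k ih =>
    calc ∑ s', stateDist ρ P π (k + 1) s'
        = ∑ s, ∑ a, stateDist ρ P π k s * π k s a * ∑ s', P k s a s' := by
          simp only [stateDist_succ, mul_sum]
          rw [sum_comm]
          exact sum_congr rfl fun s _ => sum_comm
      _ = 1 := by simp only [(hP _ _ _).2, mul_one, ← mul_sum, (hπ _ _).2, ih]

theorem stateDist_congr {k : ℕ} (h : ∀ j < k, π j = π' j) :
    stateDist ρ P π k = stateDist ρ P π' k := by
  induction k with
  | zero => rfl
  | succ k ih =>
    funext s'
    simp only [stateDist_succ, ih fun j hj => h j (by omega), h k k.lt_succ_self]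

theorem saDist_nonneg (hρ : IsInitDist ρ) (hP : IsTransition P) (hπ : IsPolicy π)
    (k : ℕ) (s : S) (a : A) : 0 ≤ saDist ρ P π k s a :=
  mul_nonneg (stateDist_nonneg hρ hP hπ k s) ((hπ k s).1 a)

theorem saDist_le_stateDist (hρ : IsInitDist ρ) (hP : IsTransition P) (hπ : IsPolicy π)
    (k : ℕ) (s : S) (a : A) : saDist ρ P π k s a ≤ stateDist ρ P π k s :=
  mul_le_of_le_one_right (stateDist_nonneg hρ hP hπ k s) (hπ.le_one k s a)

theorem sum_saDist (hρ : IsInitDist ρ) (hP : IsTransition P) (hπ : IsPolicy π) (k : ℕ) :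
    ∑ s, ∑ a, saDist ρ P π k s a = 1 := by
  simp only [saDist, ← mul_sum, (hπ _ _).2, mul_one, sum_stateDist hρ hP hπ]

end MDP

theorem abs_sub_sub_le_of_le {x y q : ℝ} (hxy : x ≤ y) : |y - q| - y ≤ |x - q| - x := by
  have := abs_sub_le y x q
  rw [abs_of_nonneg (sub_nonneg.2 hxy)] at this
  linarith

theorem abs_sub_sub_lt_of_lt {x y q : ℝ} (hxq : x < q) (hxy : x < y) :
    |y - q| - y < |x - q| - x := by
  rw [abs_of_neg (sub_neg.2 hxq)]
  cases abs_cases (y - q) <;> linarith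

section VailLoss

variable {S A : Type*} [Fintype S] [Fintype A] {G : Finset S} {a1 : A}
  {ρ : S → ℝ} {P : ℕ → S → A → S → ℝ} {π π' Q : ℕ → S → A → ℝ} {k : ℕ}

theorem sum_abs_sub_eq_of_support (G : Finset S) (a1 : A) {x q : S → A → ℝ}
    (hx : ∀ s a, 0 ≤ x s a) (hq : ∀ s a, (s ∉ G ∨ a ≠ a1) → q s a = 0) :
    ∑ s, ∑ a, |x s a - q s a| = ∑ s, ∑ a, x s a + ∑ s ∈ G, (|x s a1 - q s a1| - x s a1) := by
  classical
  have hterm : ∀ s a, |x s a - q s a| = x s a +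
      if a = a1 then (if s ∈ G then |x s a1 - q s a1| - x s a1 else 0) else 0 := by
    intro s a
    by_cases ha : a = a1
    · subst ha
      rw [if_pos rfl]
      split_ifs with hs
      · ring
      · rw [hq s a (Or.inl hs), sub_zero, abs_of_nonneg (hx s a), add_zero]
    · rw [if_neg ha, hq s a (Or.inr ha), sub_zero, abs_of_nonneg (hx s a), add_zero]
  rw [sum_congr rfl fun s _ => sum_congr rfl fun a _ => hterm s a]
  simp only [sum_add_distrib, sum_ite_eq', mem_univ, if_true, sum_ite_mem, univ_inter]

noncomputable def vailStepLoss (ρ : S → ℝ) (P : ℕ → S → A → S → ℝ) (π Q : ℕ → S → A → ℝ)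
    (k : ℕ) : ℝ :=
  ∑ s, ∑ a, |saDist ρ P π k s a - Q k s a|

theorem vailStepLoss_eq (hρ : IsInitDist ρ) (hP : IsTransition P)
    (hQ : ∀ s a, (s ∉ G ∨ a ≠ a1) → Q k s a = 0) (hπ : IsPolicy π) :
    vailStepLoss ρ P π Q k =
      1 + ∑ s ∈ G, (|saDist ρ P π k s a1 - Q k s a1| - saDist ρ P π k s a1) := by
  rw [vailStepLoss, sum_abs_sub_eq_of_support G a1 (saDist_nonneg hρ hP hπ k) hQ,
    sum_saDist hρ hP hπ]

theorem vailStepLoss_le_of_saDist_le (hρ : IsInitDist ρ) (hP : IsTransition P)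
    (hQ : ∀ s a, (s ∉ G ∨ a ≠ a1) → Q k s a = 0) (hπ : IsPolicy π) (hπ' : IsPolicy π')
    (hle : ∀ s ∈ G, saDist ρ P π k s a1 ≤ saDist ρ P π' k s a1) :
    vailStepLoss ρ P π' Q k ≤ vailStepLoss ρ P π Q k := by
  rw [vailStepLoss_eq hρ hP hQ hπ, vailStepLoss_eq hρ hP hQ hπ']
  exact (add_le_add_iff_left 1).2 (sum_le_sum fun s hs => abs_sub_sub_le_of_le (hle s hs))

theorem vailStepLoss_lt_of_saDist_lt (hρ : IsInitDist ρ) (hP : IsTransition P)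
    (hQ : ∀ s a, (s ∉ G ∨ a ≠ a1) → Q k s a = 0) (hπ : IsPolicy π) (hπ' : IsPolicy π')
    (hle : ∀ s ∈ G, saDist ρ P π k s a1 ≤ saDist ρ P π' k s a1)
    (hlt : ∃ s ∈ G, saDist ρ P π k s a1 < Q k s a1 ∧
      saDist ρ P π k s a1 < saDist ρ P π' k s a1) :
    vailStepLoss ρ P π' Q k < vailStepLoss ρ P π Q k := by
  rw [vailStepLoss_eq hρ hP hQ hπ, vailStepLoss_eq hρ hP hQ hπ']
  obtain ⟨s, hs, hsQ, hs'⟩ := hlt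
  exact (add_lt_add_iff_left 1).2 (sum_lt_sum (fun s hs => abs_sub_sub_le_of_le (hle s hs))
    ⟨s, hs, abs_sub_sub_lt_of_lt hsQ hs'⟩)

end VailLoss

def EntersGoodOnlyByExpert {S A : Type*} (P : ℕ → S → A → S → ℝ) (G : Finset S) (a1 : A) :
    Prop :=
  ∀ k s a, (s ∉ G ∨ a ≠ a1) → ∀ s' ∈ G, P k s a s' = 0

theorem ResetCliff.entersGoodOnlyByExpert {S A : Type*} [Fintype S] [Fintype A] [DecidableEq S]
    {ρ : S → ℝ} {P : ℕ → S → A → S → ℝ} {r : ℕ → S → A → ℝ} {G : Finset S} {a1 : A}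
    (hRC : ResetCliff ρ P r G a1) (hP : IsTransition P) : EntersGoodOnlyByExpert P G a1 := by
  intro k s a hsa
  have hbad : ∑ s' ∈ Gᶜ, P k s a s' = 1 := by
    by_cases hs : s ∈ G
    · exact hRC.2.2.2.2.2.1 k s hs a (hsa.resolve_left (not_not.2 hs))
    · exact hRC.2.2.2.2.2.2.1 k s hs a
  have hgood : ∑ s' ∈ G, P k s a s' = 0 := by
    linarith [sum_add_sum_compl G (P k s a), (hP k s a).2]
  exact (sum_eq_zero_iff_of_nonneg fun s' _ => (hP k s a).1 s').1 hgood

section ResetCliffDynamics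

variable {S A : Type*} [Fintype S] [Fintype A] {G : Finset S} {a1 : A}
  {ρ : S → ℝ} {P : ℕ → S → A → S → ℝ} {π : ℕ → S → A → ℝ}

theorem stateDist_succ_of_mem (hin : EntersGoodOnlyByExpert P G a1) (k : ℕ) {s' : S}
    (hs' : s' ∈ G) :
    stateDist ρ P π (k + 1) s' = ∑ s ∈ G, saDist ρ P π k s a1 * P k s a1 s' := by
  rw [stateDist_succ, ← sum_subset (subset_univ G)]
  · refine sum_congr rfl fun s _ => sum_eq_single a1 (fun a _ ha => ?_) (by simp)
    rw [hin k s a (Or.inr ha) s' hs', mul_zero]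
  · refine fun s _ hs => sum_eq_zero fun a _ => ?_
    rw [hin k s a (Or.inl hs) s' hs', mul_zero]

theorem sum_stateDist_succ_of_mem (hin : EntersGoodOnlyByExpert P G a1) {k : ℕ}
    (hstay : ∀ s ∈ G, ∑ s' ∈ G, P k s a1 s' = 1) :
    ∑ s' ∈ G, stateDist ρ P π (k + 1) s' = ∑ s ∈ G, saDist ρ P π k s a1 := by
  rw [sum_congr rfl fun s' hs' => stateDist_succ_of_mem hin k hs', sum_comm]
  exact sum_congr rfl fun s hs => by rw [← mul_sum, hstay s hs, mul_one]

theorem stateDist_pos_of_expert (hin : EntersGoodOnlyByExpert P G a1)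
    (hG : G.Nonempty) (hρG : ∀ s ∈ G, 0 < ρ s)
    (hreach : ∀ k, ∀ s ∈ G, ∀ s' ∈ G, 0 < P k s a1 s') {h : ℕ}
    (hexp : ∀ k < h, ∀ s ∈ G, π k s a1 = 1) : ∀ s ∈ G, 0 < stateDist ρ P π h s := by
  induction h with
  | zero => exact hρG
  | succ k ih =>
    intro s' hs'
    rw [stateDist_succ_of_mem hin k hs']
    refine sum_pos (fun s hs => ?_) hG
    rw [saDist, hexp k k.lt_succ_self s hs, mul_one]
    exact mul_pos (ih (fun j hj => hexp j (by omega)) s hs) (hreach k s hs s' hs')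

end ResetCliffDynamics

open Classical in
noncomputable def switchToExpert {S A : Type*} (π : ℕ → S → A → ℝ) (G : Finset S) (a1 : A)
    (h : ℕ) : ℕ → S → A → ℝ :=
  fun k s a => if h ≤ k ∧ s ∈ G then (if a = a1 then 1 else 0) else π k s a

section SwitchToExpert

variable {S A : Type*} {G : Finset S} {a1 : A} {π : ℕ → S → A → ℝ} {h k : ℕ}

theorem IsPolicy.switchToExpert [Fintype A] (hπ : IsPolicy π) :
    IsPolicy (switchToExpert π G a1 h) := by
  classical
  intro k s
  unfold _root_.switchToExpert
  split_ifs
  · exact ⟨fun a => by split_ifs <;> norm_num, by simp⟩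
  · exact hπ k s

theorem switchToExpert_of_lt (hk : k < h) : switchToExpert π G a1 h k = π k := by
  funext s a
  simp only [switchToExpert, show ¬h ≤ k by omega, false_and, if_false]

theorem switchToExpert_of_mem (hk : h ≤ k) {s : S} (hs : s ∈ G) :
    switchToExpert π G a1 h k s a1 = 1 := by
  simp only [switchToExpert, hk, hs, and_self, if_true]

variable [Fintype S] [Fintype A] {ρ : S → ℝ} {P : ℕ → S → A → S → ℝ} {Q : ℕ → S → A → ℝ}

theorem stateDist_switchToExpert_of_le (hk : k ≤ h) :
    stateDist ρ P (switchToExpert π G a1 h) k = stateDist ρ P π k :=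
  stateDist_congr fun _ hj => switchToExpert_of_lt (by omega)

theorem saDist_switchToExpert_of_mem (hk : h ≤ k) {s : S} (hs : s ∈ G) :
    saDist ρ P (switchToExpert π G a1 h) k s a1 =
      stateDist ρ P (switchToExpert π G a1 h) k s := by
  rw [saDist, switchToExpert_of_mem hk hs, mul_one]

theorem stateDist_le_stateDist_switchToExpert (hρ : IsInitDist ρ) (hP : IsTransition P)
    (hπ : IsPolicy π) (hin : EntersGoodOnlyByExpert P G a1)
    (hk : h ≤ k) :
    ∀ s ∈ G, stateDist ρ P π k s ≤ stateDist ρ P (switchToExpert π G a1 h) k s := by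
  induction k, hk using Nat.le_induction with
  | base => simp [stateDist_switchToExpert_of_le le_rfl]
  | succ k hk ih =>
    intro s' hs'
    rw [stateDist_succ_of_mem hin k hs', stateDist_succ_of_mem hin k hs']
    refine sum_le_sum fun s hs => mul_le_mul_of_nonneg_right ?_ ((hP k s a1).1 s')
    rw [saDist_switchToExpert_of_mem hk hs]
    exact (saDist_le_stateDist hρ hP hπ k s a1).trans (ih s hs)

theorem saDist_le_saDist_switchToExpert (hρ : IsInitDist ρ) (hP : IsTransition P)
    (hπ : IsPolicy π) (hin : EntersGoodOnlyByExpert P G a1)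
    (k : ℕ) : ∀ s ∈ G, saDist ρ P π k s a1 ≤ saDist ρ P (switchToExpert π G a1 h) k s a1 := by
  intro s hs
  rcases lt_or_ge k h with hk | hk
  · rw [saDist, saDist, stateDist_switchToExpert_of_le hk.le, switchToExpert_of_lt hk]
  · rw [saDist_switchToExpert_of_mem hk hs]
    exact (saDist_le_stateDist hρ hP hπ k s a1).trans
      (stateDist_le_stateDist_switchToExpert hρ hP hπ hin hk s hs)

theorem stateDist_lt_stateDist_switchToExpert_succ (hρ : IsInitDist ρ) (hP : IsTransition P)
    (hπ : IsPolicy π) (hin : EntersGoodOnlyByExpert P G a1)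
    (hreach : ∀ s ∈ G, ∀ s' ∈ G, 0 < P h s a1 s') {s₀ : S} (hs₀ : s₀ ∈ G)
    (hpos : 0 < stateDist ρ P π h s₀) (hdev : π h s₀ a1 < 1) :
    ∀ s' ∈ G,
      stateDist ρ P π (h + 1) s' < stateDist ρ P (switchToExpert π G a1 h) (h + 1) s' := by
  intro s' hs'
  rw [stateDist_succ_of_mem hin h hs', stateDist_succ_of_mem hin h hs']
  refine sum_lt_sum (fun s hs => mul_le_mul_of_nonneg_right
    (saDist_le_saDist_switchToExpert hρ hP hπ hin h s hs) ((hP h s a1).1 s')) ⟨s₀, hs₀, ?_⟩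
  refine mul_lt_mul_of_pos_right ?_ (hreach s₀ hs₀ s' hs')
  rw [saDist_switchToExpert_of_mem le_rfl hs₀, stateDist_switchToExpert_of_le le_rfl]
  exact mul_lt_of_lt_one_right hpos hdev

theorem exists_saDist_lt_of_deviation (hρ : IsInitDist ρ) (hP : IsTransition P)
    (hπ : IsPolicy π) (hin : EntersGoodOnlyByExpert P G a1)
    (hstay : ∀ s ∈ G, ∑ s' ∈ G, P h s a1 s' = 1) (hQ : ∑ s ∈ G, Q (h + 1) s a1 = 1)
    {s₀ : S} (hs₀ : s₀ ∈ G) (hpos : 0 < stateDist ρ P π h s₀) (hdev : π h s₀ a1 < 1) :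
    ∃ s ∈ G, saDist ρ P π (h + 1) s a1 < Q (h + 1) s a1 := by
  refine exists_lt_of_sum_lt (hQ ▸ ?_)
  calc ∑ s ∈ G, saDist ρ P π (h + 1) s a1
      ≤ ∑ s ∈ G, stateDist ρ P π (h + 1) s :=
        sum_le_sum fun s _ => saDist_le_stateDist hρ hP hπ _ s a1
    _ = ∑ s ∈ G, saDist ρ P π h s a1 := sum_stateDist_succ_of_mem hin hstay
    _ < ∑ s ∈ G, stateDist ρ P π h s :=
        sum_lt_sum (fun s _ => saDist_le_stateDist hρ hP hπ h s a1)
          ⟨s₀, hs₀, mul_lt_of_lt_one_right hpos hdev⟩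
    _ ≤ ∑ s, stateDist ρ P π h s :=
        sum_le_sum_of_subset_of_nonneg (subset_univ G)
          fun s _ _ => stateDist_nonneg hρ hP hπ h s
    _ = 1 := sum_stateDist hρ hP hπ h

theorem vailLoss_switchToExpert_lt [DecidableEq S] {H : ℕ} (hρ : IsInitDist ρ)
    (hP : IsTransition P) (hπ : IsPolicy π) (hin : EntersGoodOnlyByExpert P G a1)
    (hstay : ∀ s ∈ G, ∑ s' ∈ G, P h s a1 s' = 1)
    (hreach : ∀ s ∈ G, ∀ s' ∈ G, 0 < P h s a1 s')
    (hQ : AdmissibleEst G a1 Q H) (hH : h + 1 < H)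
    {s₀ : S} (hs₀ : s₀ ∈ G) (hpos : 0 < stateDist ρ P π h s₀) (hdev : π h s₀ a1 < 1) :
    vailLoss ρ P (switchToExpert π G a1 h) Q H < vailLoss ρ P π Q H := by
  have hπ' : IsPolicy (switchToExpert π G a1 h) := hπ.switchToExpert
  refine sum_lt_sum (fun k hk => vailStepLoss_le_of_saDist_le hρ hP
    (hQ k (mem_range.1 hk)).2.1 hπ hπ' (saDist_le_saDist_switchToExpert hρ hP hπ hin k))
    ⟨h + 1, mem_range.2 hH, vailStepLoss_lt_of_saDist_lt hρ hP (hQ _ hH).2.1 hπ hπ'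
      (saDist_le_saDist_switchToExpert hρ hP hπ hin _) ?_⟩
  obtain ⟨s, hs, hsQ⟩ :=
    exists_saDist_lt_of_deviation hρ hP hπ hin hstay (hQ _ hH).2.2 hs₀ hpos hdev
  refine ⟨s, hs, hsQ, ?_⟩
  rw [saDist_switchToExpert_of_mem h.le_succ hs]
  exact (saDist_le_stateDist hρ hP hπ _ s a1).trans_lt
    (stateDist_lt_stateDist_switchToExpert_succ hρ hP hπ hin hreach hs₀ hpos hdev s hs)

end SwitchToExpert

theorem vail_minimizer_recovers_expert_general {S A : Type*} [Fintype S] [Fintype A]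
    [DecidableEq S]
    (ρ : S → ℝ) (P : ℕ → S → A → S → ℝ) (r : ℕ → S → A → ℝ)
    (πAIL : ℕ → S → A → ℝ) (G : Finset S) (a1 : A)
    (Q : ℕ → S → A → ℝ) (H : ℕ)
    (hρ : IsInitDist ρ) (hP : IsTransition P)
    (hAILpol : IsPolicy πAIL)
    (hRC : ResetCliff ρ P r G a1)
    (hQ : AdmissibleEst G a1 Q H)
    (hmin : ∀ π, IsPolicy π → vailLoss ρ P πAIL Q H ≤ vailLoss ρ P π Q H) :
    ∀ h : ℕ, h + 1 < H → ∀ s ∈ G, πAIL h s a1 = 1 := by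
  have hin := hRC.entersGoodOnlyByExpert hP
  obtain ⟨hG, -, -, hstay, hreach, -, -, hρG, -⟩ := hRC
  intro h
  induction h using Nat.strong_induction_on with
  | _ h IH =>
  intro hH s₀ hs₀
  by_contra hne
  have hpos : 0 < stateDist ρ P πAIL h s₀ :=
    stateDist_pos_of_expert hin hG hρG hreach (fun k hk => IH k hk (by omega)) s₀ hs₀
  have hdev : πAIL h s₀ a1 < 1 := (hAILpol.le_one h s₀ a1).lt_of_ne hne
  exact (hmin _ hAILpol.switchToExpert).not_gt <| vailLoss_switchToExpert_lt hρ hP hAILpol hin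
    (hstay h) (hreach h) hQ hH hs₀ hpos hdev

/-- on any Reset Cliff instance with admissible estimates, any global minimizer
`πAIL` of the VAIL objective exactly recovers the expert action on all good states in the first
`H − 1` time steps (0-indexed: all `h` with `h + 1 < H`). -/
theorem vail_minimizer_recovers_expert {S A : Type*} [Fintype S] [Fintype A]
    [Nonempty S] [Nonempty A] [DecidableEq S]
    (ρ : S → ℝ) (P : ℕ → S → A → S → ℝ) (r : ℕ → S → A → ℝ)
    (πE πAIL : ℕ → S → A → ℝ) (G : Finset S) (a1 : A)
    (Q : ℕ → S → A → ℝ) (H : ℕ) (hH : 1 ≤ H)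
    (hρ : IsInitDist ρ) (hP : IsTransition P) (hr : IsReward r)
    (hE : IsPolicy πE) (hAILpol : IsPolicy πAIL)
    (hRC : ResetCliff ρ P r G a1)
    (hEa : ∀ h s, πE h s a1 = 1)
    (hQ : AdmissibleEst G a1 Q H)
    (hmin : ∀ π, IsPolicy π → vailLoss ρ P πAIL Q H ≤ vailLoss ρ P π Q H) :
    ∀ h : ℕ, h + 1 < H → ∀ s ∈ G, πAIL h s a1 = 1 :=
  vail_minimizer_recovers_expert_general ρ P r πAIL G a1 Q H hρ hP hAILpol hRC hQ hmin
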